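/- For every $\varepsilon > 0$ and every finite-dimensional real normed vector space $V$, there exists a constant $c_\varepsilon \in (0,1)$ such that for every $\varepsilon$-proximal linear transformation $g$ of $V$, one has $c_\varepsilon \|g\| \leq \lambda_1(g) \leq \|g\|$, where $\lambda_1(g)$ is the maximal modulus of the (complex) eigenvalues of $g$ and $\|g\|$ is the operator norm. -/

import Mathlib

open Filter Topology

variable {V : Type*} [NormedAddCommGroup V] [NormedSpace ℝ V]

/-- The distance between two lines (points of `ℙ(V)`), viewed as submodules:
`d(x₁, x₂) = inf {‖v₁ - v₂‖ : vᵢ ∈ xᵢ, ‖vᵢ‖ = 1}`. -/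
noncomputable def projDist (x₁ x₂ : Submodule ℝ V) : ℝ :=
  sInf {r : ℝ | ∃ v₁ ∈ x₁, ∃ v₂ ∈ x₂, ‖v₁‖ = 1 ∧ ‖v₂‖ = 1 ∧ r = ‖v₁ - v₂‖}

/-- The distance `δ(x, ℙ(W))` from a line `x` to the projectivization of a subspace `W`. -/
noncomputable def projDelta (x W : Submodule ℝ V) : ℝ :=
  sInf {r : ℝ | ∃ y : Submodule ℝ V, y ≤ W ∧ Module.finrank ℝ y = 1 ∧ r = projDist x y}

/-- The spectral radius of an endomorphism, via Gelfand's formula; in finite dimension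
this is the maximal modulus `λ₁(g)` of the complex eigenvalues of `g`. -/
noncomputable def specRad (g : V →L[ℝ] V) : ℝ :=
  Filter.limsup (fun n : ℕ => ‖g ^ n‖ ^ ((1 : ℝ) / n)) Filter.atTop

/-- `g` is proximal with top (real) eigenvalue `α`, attracting eigenvector `v`, and
invariant complementary hyperplane `W` on which the spectral radius is `< |α|`; this says
exactly that `α` is the unique eigenvalue of maximal modulus and has multiplicity one. -/
def IsProximalWith (g : V →L[ℝ] V) (α : ℝ) (v : V) (W : Submodule ℝ V) : Prop :=
  v ≠ 0 ∧ g v = α • v ∧ IsCompl (Submodule.span ℝ {v}) W ∧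
  ∃ gW : W →L[ℝ] W, (∀ w : W, g (w : V) = (gW w : V)) ∧ specRad gW < |α|

/-- `g` is `ε`-proximal with data `(α, v, W)`: it is proximal, `δ(x_g⁺, X_g^<) ≥ 2ε`,
`g` maps `B_g^ε` into `b_g^ε`, and `g` is `ε`-Lipschitz on `B_g^ε` (in `ℙ(V)`). -/
def IsEpsProximalWith (g : V →L[ℝ] V) (ε α : ℝ) (v : V) (W : Submodule ℝ V) : Prop :=
  IsProximalWith g α v W ∧ 2 * ε ≤ projDelta (Submodule.span ℝ {v}) W ∧
  (∀ x : Submodule ℝ V, Module.finrank ℝ x = 1 → ε ≤ projDelta x W →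
    Submodule.map (g : V →ₗ[ℝ] V) x ≠ ⊥ ∧
      projDist (Submodule.map (g : V →ₗ[ℝ] V) x) (Submodule.span ℝ {v}) ≤ ε) ∧
  (∀ x y : Submodule ℝ V, Module.finrank ℝ x = 1 → Module.finrank ℝ y = 1 →
    ε ≤ projDelta x W → ε ≤ projDelta y W →
    projDist (Submodule.map (g : V →ₗ[ℝ] V) x) (Submodule.map (g : V →ₗ[ℝ] V) y) ≤
      ε * projDist x y)

/-- `g` is `ε`-proximal. -/
def IsEpsProximal (g : V →L[ℝ] V) (ε : ℝ) : Prop :=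
  ∃ α v W, IsEpsProximalWith g ε α v W

/-! Write `V = ℝ e ⊕ W` with `e` the unit attracting vector of `g`, `g e = α e`. The bound
`δ(x_g⁺, X_g^<) ≥ 2ε` makes this splitting uniformly transversal: `ε |t| ≤ ‖t e + w‖` and
`ε ‖w‖ ≤ (1 + ε) ‖t e + w‖`. For a unit `w ∈ W` the line through `u = e + (ε/8) w` still lies
in `B_g^ε`, so the Lipschitz property puts its image, the line through `α e + (ε/8) g w`, within
`ε d(u, e) ≤ ε²/4` of `x_g⁺`; by transversality this distance is at least of order
`ε² ‖g w‖ / ‖α e + (ε/8) g w‖`, which forces `‖g w‖ ≤ 8 |α|`. Hence `ε ‖g‖ ≤ 17 |α|`, and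
`|α| ≤ λ₁(g)` since `α` is an eigenvalue. -/

open Submodule

lemma projDist_nonneg (x₁ x₂ : Submodule ℝ V) : 0 ≤ projDist x₁ x₂ :=
  Real.sInf_nonneg <| by
    rintro r ⟨v₁, -, v₂, -, -, -, rfl⟩
    exact norm_nonneg _

lemma projDist_le_norm_sub {x₁ x₂ : Submodule ℝ V} {v₁ v₂ : V} (h₁ : v₁ ∈ x₁) (h₂ : v₂ ∈ x₂)
    (n₁ : ‖v₁‖ = 1) (n₂ : ‖v₂‖ = 1) : projDist x₁ x₂ ≤ ‖v₁ - v₂‖ :=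
  csInf_le ⟨0, by rintro r ⟨w₁, -, w₂, -, -, -, rfl⟩; exact norm_nonneg _⟩
    ⟨v₁, h₁, v₂, h₂, n₁, n₂, rfl⟩

lemma exists_mem_norm_eq_one {x : Submodule ℝ V} (hx : x ≠ ⊥) : ∃ u ∈ x, ‖u‖ = 1 := by
  obtain ⟨u, hu, hu0⟩ := exists_mem_ne_zero_of_ne_bot hx
  exact ⟨‖u‖⁻¹ • u, x.smul_mem _ hu, norm_smul_inv_norm hu0⟩

lemma le_projDist {x₁ x₂ : Submodule ℝ V} (hx₁ : x₁ ≠ ⊥) (hx₂ : x₂ ≠ ⊥) {c : ℝ}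
    (h : ∀ v₁ ∈ x₁, ∀ v₂ ∈ x₂, ‖v₁‖ = 1 → ‖v₂‖ = 1 → c ≤ ‖v₁ - v₂‖) :
    c ≤ projDist x₁ x₂ := by
  obtain ⟨u₁, hu₁, n₁⟩ := exists_mem_norm_eq_one hx₁
  obtain ⟨u₂, hu₂, n₂⟩ := exists_mem_norm_eq_one hx₂
  refine le_csInf ⟨_, u₁, hu₁, u₂, hu₂, n₁, n₂, rfl⟩ ?_
  rintro r ⟨v₁, m₁, v₂, m₂, k₁, k₂, rfl⟩
  exact h v₁ m₁ v₂ m₂ k₁ k₂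

lemma projDelta_le_projDist {x W y : Submodule ℝ V} (hy : y ≤ W) (hr : Module.finrank ℝ y = 1) :
    projDelta x W ≤ projDist x y :=
  csInf_le ⟨0, by rintro r ⟨z, -, -, rfl⟩; exact projDist_nonneg _ _⟩ ⟨y, hy, hr, rfl⟩

lemma projDelta_le_norm_sub {x W : Submodule ℝ V} {u w : V} (hu : u ∈ x) (hw : w ∈ W)
    (nu : ‖u‖ = 1) (nw : ‖w‖ = 1) : projDelta x W ≤ ‖u - w‖ :=
  (projDelta_le_projDist ((span_singleton_le_iff_mem _ _).2 hw)
    (finrank_span_singleton (norm_ne_zero_iff.1 (by rw [nw]; exact one_ne_zero)))).trans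
    (projDist_le_norm_sub hu (mem_span_singleton_self w) nu nw)

lemma le_projDelta {x W : Submodule ℝ V} (hW : W ≠ ⊥) {c : ℝ}
    (h : ∀ y : Submodule ℝ V, y ≤ W → Module.finrank ℝ y = 1 → c ≤ projDist x y) :
    c ≤ projDelta x W := by
  obtain ⟨w, hw, hw0⟩ := exists_mem_ne_zero_of_ne_bot hW
  have hwW : span ℝ {w} ≤ W := (span_singleton_le_iff_mem _ _).2 hw
  refine le_csInf ⟨_, _, hwW, finrank_span_singleton hw0, rfl⟩ ?_
  rintro r ⟨y, hy, hyr, rfl⟩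
  exact h y hy hyr

lemma projDelta_bot (x : Submodule ℝ V) : projDelta x ⊥ = 0 := by
  have : {r : ℝ | ∃ y : Submodule ℝ V, y ≤ ⊥ ∧ Module.finrank ℝ y = 1 ∧ r = projDist x y} = ∅ :=
    Set.eq_empty_of_forall_notMem fun r ⟨y, hy, hr, _⟩ ↦ by
      rw [le_bot_iff.1 hy, finrank_bot] at hr
      exact zero_ne_one hr
  rw [projDelta, this, Real.sInf_empty]

lemma eq_or_eq_neg_of_mem_span_singleton {u v : V} (hv : v ∈ span ℝ {u}) (nv : ‖v‖ = 1) :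
    v = ‖u‖⁻¹ • u ∨ v = -(‖u‖⁻¹ • u) := by
  obtain ⟨t, rfl⟩ := mem_span_singleton.1 hv
  have ht : |t| * ‖u‖ = 1 := by rw [← nv, norm_smul, Real.norm_eq_abs]
  have hu : ‖u‖⁻¹ = |t| := by rw [inv_eq_of_mul_eq_one_right (by linarith [ht] : ‖u‖ * |t| = 1)]
  rcases abs_choice t with h | h
  · left; rw [hu, h]
  · right; rw [hu, h, neg_smul, neg_neg]

lemma le_projDist_span_singleton {u : V} (hu : u ≠ 0) {y : Submodule ℝ V} (hy : y ≠ ⊥) {c : ℝ}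
    (h : ∀ v ∈ y, ‖v‖ = 1 → c ≤ ‖‖u‖⁻¹ • u - v‖) : c ≤ projDist (span ℝ {u}) y := by
  refine le_projDist (by simpa using hu) hy fun v₁ h₁ v₂ h₂ n₁ n₂ ↦ ?_
  rcases eq_or_eq_neg_of_mem_span_singleton h₁ n₁ with rfl | rfl
  · exact h v₂ h₂ n₂
  · rw [← norm_neg, neg_sub', neg_neg]
    exact h (-v₂) (y.neg_mem h₂) (by rw [norm_neg, n₂])

lemma le_projDelta_span_singleton {u : V} (hu : u ≠ 0) {W : Submodule ℝ V} (hW : W ≠ ⊥) {c : ℝ}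
    (h : ∀ w ∈ W, ‖w‖ = 1 → c ≤ ‖‖u‖⁻¹ • u - w‖) : c ≤ projDelta (span ℝ {u}) W :=
  le_projDelta hW fun y hyW hyr ↦
    le_projDist_span_singleton hu (by rintro rfl; simp at hyr) fun v hv nv ↦ h v (hyW hv) nv

lemma norm_inv_norm_smul_sub_le {u e : V} (he : ‖e‖ = 1) : ‖‖u‖⁻¹ • u - e‖ ≤ 2 * ‖u - e‖ := by
  rcases eq_or_ne u 0 with rfl | hu
  · simp [he]
  have hnorm : ‖‖u‖⁻¹ • u - u‖ ≤ ‖u - e‖ := by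
    have : ‖u‖⁻¹ • u - u = (1 - ‖u‖) • ‖u‖⁻¹ • u := by
      rw [smul_smul, sub_mul, one_mul, mul_inv_cancel₀ (norm_ne_zero_iff.2 hu), sub_smul, one_smul]
    have hunit : ‖‖u‖⁻¹ • u‖ = 1 := norm_smul_inv_norm hu
    rw [this, norm_smul, hunit, mul_one, Real.norm_eq_abs, ← he]
    exact abs_norm_sub_norm_le e u |>.trans_eq (norm_sub_rev _ _)
  calc ‖‖u‖⁻¹ • u - e‖ ≤ ‖‖u‖⁻¹ • u - u‖ + ‖u - e‖ := norm_sub_le_norm_sub_add_norm_sub _ _ _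
    _ ≤ 2 * ‖u - e‖ := by linarith

lemma projDist_span_singleton_le {u e : V} (hu : u ≠ 0) (he : ‖e‖ = 1) :
    projDist (span ℝ {u}) (span ℝ {e}) ≤ 2 * ‖u - e‖ :=
  (projDist_le_norm_sub (smul_mem _ _ (mem_span_singleton_self u)) (mem_span_singleton_self e)
    (norm_smul_inv_norm hu) he).trans (norm_inv_norm_smul_sub_le he)

section Transversality

variable {e : V} {W : Submodule ℝ V} {ε : ℝ}

lemma le_norm_sub_of_two_mul_le (he : ‖e‖ = 1) (hε : ε ≤ 1)
    (h : ∀ w ∈ W, ‖w‖ = 1 → 2 * ε ≤ ‖e - w‖) {w : V} (hw : w ∈ W) : ε ≤ ‖e - w‖ := by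
  rcases eq_or_ne w 0 with rfl | hw0
  · rwa [sub_zero, he]
  have := h _ (W.smul_mem ‖w‖⁻¹ hw) (norm_smul_inv_norm hw0)
  rw [norm_sub_rev] at this
  linarith [norm_inv_norm_smul_sub_le (u := w) he, norm_sub_rev e w]

lemma mul_abs_le_norm_smul_add (h : ∀ w ∈ W, ε ≤ ‖e - w‖) (t : ℝ) {w : V} (hw : w ∈ W) :
    ε * |t| ≤ ‖t • e + w‖ := by
  rcases eq_or_ne t 0 with rfl | ht
  · simp
  have : t • e + w = t • (e - -(t⁻¹ • w)) := by
    rw [sub_neg_eq_add, smul_add, smul_smul, mul_inv_cancel₀ ht, one_smul]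
  rw [this, norm_smul, Real.norm_eq_abs, mul_comm]
  exact mul_le_mul_of_nonneg_left (h _ (W.neg_mem (W.smul_mem _ hw))) (abs_nonneg t)

lemma mul_norm_le_norm_smul_add (he : ‖e‖ = 1) (hε : 0 ≤ ε) (h : ∀ w ∈ W, ε ≤ ‖e - w‖)
    (t : ℝ) {w : V} (hw : w ∈ W) : ε * ‖w‖ ≤ (1 + ε) * ‖t • e + w‖ := by
  have hw_le : ‖w‖ ≤ ‖t • e + w‖ + |t| := by
    calc ‖w‖ = ‖(t • e + w) - t • e‖ := by rw [add_sub_cancel_left]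
      _ ≤ ‖t • e + w‖ + ‖t • e‖ := norm_sub_le _ _
      _ = ‖t • e + w‖ + |t| := by rw [norm_smul, Real.norm_eq_abs, he, mul_one]
  nlinarith [mul_abs_le_norm_smul_add h t hw]

lemma le_projDelta_span_of_norm_sub_le (he : ‖e‖ = 1) (hW : W ≠ ⊥)
    (h : ∀ w ∈ W, ‖w‖ = 1 → 2 * ε ≤ ‖e - w‖) {u : V} (hu : u ≠ 0) (hue : ‖u - e‖ ≤ ε / 2) :
    ε ≤ projDelta (span ℝ {u}) W := by
  refine le_projDelta_span_singleton hu hW fun w hw nw ↦ ?_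
  have := h w hw nw
  linarith [norm_sub_le_norm_sub_add_norm_sub e (‖u‖⁻¹ • u) w,
    norm_inv_norm_smul_sub_le (u := u) he, norm_sub_rev e (‖u‖⁻¹ • u)]

lemma mul_norm_le_mul_projDist (he : ‖e‖ = 1) (hε : 0 ≤ ε) (h : ∀ w ∈ W, ε ≤ ‖e - w‖)
    (a : ℝ) {w : V} (hw : w ∈ W) (hz : a • e + w ≠ 0) :
    ε * ‖w‖ ≤ (1 + ε) * ‖a • e + w‖ * projDist (span ℝ {a • e + w}) (span ℝ {e}) := by
  set z := a • e + w
  have hz_pos : 0 < ‖z‖ := norm_pos_iff.2 hz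
  have he0 : e ≠ 0 := norm_ne_zero_iff.1 (by rw [he]; exact one_ne_zero)
  suffices ε * ‖w‖ / ((1 + ε) * ‖z‖) ≤ projDist (span ℝ {z}) (span ℝ {e}) by
    rwa [div_le_iff₀ (by positivity), mul_comm (projDist _ _)] at this
  refine le_projDist_span_singleton hz (by simpa using he0) fun v hv _ ↦ ?_
  obtain ⟨r, rfl⟩ := mem_span_singleton.1 hv
  have hsplit : ‖z‖⁻¹ • z - r • e = (‖z‖⁻¹ * a - r) • e + ‖z‖⁻¹ • w := by simp only [z]; module
  have := mul_norm_le_norm_smul_add he hε h (‖z‖⁻¹ * a - r) (W.smul_mem ‖z‖⁻¹ hw)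
  rw [← hsplit, norm_smul, norm_inv, norm_norm] at this
  rw [div_le_iff₀ (by positivity)]
  calc ε * ‖w‖ = ‖z‖ * (ε * (‖z‖⁻¹ * ‖w‖)) := by field_simp
    _ ≤ ‖z‖ * ((1 + ε) * ‖‖z‖⁻¹ • z - r • e‖) := by gcongr
    _ = ‖‖z‖⁻¹ • z - r • e‖ * ((1 + ε) * ‖z‖) := by ring

end Transversality

lemma norm_pow_rpow_one_div_le (g : V →L[ℝ] V) {n : ℕ} (hn : 0 < n) :
    ‖g ^ n‖ ^ ((1 : ℝ) / n) ≤ ‖g‖ :=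
  calc ‖g ^ n‖ ^ ((1 : ℝ) / n) ≤ (‖g‖ ^ n) ^ ((n : ℝ)⁻¹) := by
        rw [one_div]; gcongr; exact norm_pow_le' g hn
    _ = ‖g‖ := Real.pow_rpow_inv_natCast (norm_nonneg g) hn.ne'

lemma isBoundedUnder_norm_pow_rpow (g : V →L[ℝ] V) :
    IsBoundedUnder (· ≤ ·) atTop fun n : ℕ ↦ ‖g ^ n‖ ^ ((1 : ℝ) / n) := by
  refine isBoundedUnder_of ⟨max 1 ‖g‖, fun n ↦ ?_⟩
  rcases Nat.eq_zero_or_pos n with rfl | hn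
  · simp
  · exact (norm_pow_rpow_one_div_le g hn).trans (le_max_right _ _)

lemma specRad_le_norm (g : V →L[ℝ] V) : specRad g ≤ ‖g‖ :=
  limsup_le_of_le (isCoboundedUnder_le_of_le atTop fun _ ↦ by positivity)
    (eventually_gt_atTop 0 |>.mono fun _ ↦ norm_pow_rpow_one_div_le g)

lemma pow_apply_of_apply_eq_smul {g : V →L[ℝ] V} {α : ℝ} {v : V} (hgv : g v = α • v) (n : ℕ) :
    (g ^ n) v = α ^ n • v := by
  induction n with
  | zero => simp
  | succ n ih => rw [pow_succ', ContinuousLinearMap.mul_def, ContinuousLinearMap.comp_apply, ih,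
      map_smul, hgv, smul_smul, pow_succ]

lemma abs_le_specRad {g : V →L[ℝ] V} {α : ℝ} {v : V} (hv : v ≠ 0) (hgv : g v = α • v) :
    |α| ≤ specRad g := by
  have hpow (n : ℕ) : |α| ^ n ≤ ‖g ^ n‖ := by
    have := (g ^ n).le_opNorm v
    rw [pow_apply_of_apply_eq_smul hgv, norm_smul, Real.norm_eq_abs, abs_pow] at this
    exact le_of_mul_le_mul_right this (norm_pos_iff.2 hv)
  refine le_limsup_of_frequently_le (Eventually.frequently ?_) (isBoundedUnder_norm_pow_rpow g)
  filter_upwards [eventually_gt_atTop 0] with n hn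
  calc |α| = (|α| ^ n) ^ ((n : ℝ)⁻¹) := (Real.pow_rpow_inv_natCast (abs_nonneg α) hn.ne').symm
    _ ≤ ‖g ^ n‖ ^ ((1 : ℝ) / n) := by rw [one_div]; gcongr; exact hpow n

namespace IsEpsProximalWith

variable {g : V →L[ℝ] V} {ε α : ℝ} {v : V} {W : Submodule ℝ V}

lemma norm_inv_norm_smul_eq_one (hg : IsEpsProximalWith g ε α v W) : ‖‖v‖⁻¹ • v‖ = 1 :=
  norm_smul_inv_norm hg.1.1

lemma span_inv_norm_smul (hg : IsEpsProximalWith g ε α v W) :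
    span ℝ {‖v‖⁻¹ • v} = span ℝ {v} :=
  span_singleton_smul_eq (inv_pos.2 (norm_pos_iff.2 hg.1.1)).ne'.isUnit v

lemma apply_inv_norm_smul (hg : IsEpsProximalWith g ε α v W) :
    g (‖v‖⁻¹ • v) = α • ‖v‖⁻¹ • v := by
  rw [map_smul, hg.1.2.1, smul_comm]

lemma apply_mem (hg : IsEpsProximalWith g ε α v W) {w : V} (hw : w ∈ W) : g w ∈ W := by
  obtain ⟨gW, hgW, -⟩ := hg.1.2.2.2
  rw [show w = (⟨w, hw⟩ : W) from rfl, hgW]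
  exact (gW ⟨w, hw⟩).2

lemma two_mul_le_norm_sub (hg : IsEpsProximalWith g ε α v W) {w : V} (hw : w ∈ W)
    (nw : ‖w‖ = 1) : 2 * ε ≤ ‖‖v‖⁻¹ • v - w‖ :=
  hg.2.1.trans <| projDelta_le_norm_sub (smul_mem _ _ (mem_span_singleton_self v)) hw
    hg.norm_inv_norm_smul_eq_one nw

lemma ne_bot (hg : IsEpsProximalWith g ε α v W) (hε : 0 < ε) : W ≠ ⊥ := by
  rintro rfl
  have := hg.2.1
  rw [projDelta_bot] at this
  linarith

lemma le_one (hg : IsEpsProximalWith g ε α v W) (hε : 0 < ε) : ε ≤ 1 := by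
  obtain ⟨w, hw, nw⟩ := exists_mem_norm_eq_one (hg.ne_bot hε)
  have := hg.two_mul_le_norm_sub hw nw
  linarith [norm_sub_le (‖v‖⁻¹ • v) w, hg.norm_inv_norm_smul_eq_one]

lemma ne_zero (hg : IsEpsProximalWith g ε α v W) (hε : 0 ≤ ε) : α ≠ 0 := by
  rintro rfl
  have := (hg.2.2.1 _ (finrank_span_singleton hg.1.1) (by linarith [hg.2.1])).1
  rw [map_span, Set.image_singleton, ContinuousLinearMap.coe_coe, hg.1.2.1, zero_smul] at this
  exact this (span_zero_singleton ℝ)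

lemma le_norm_sub (hg : IsEpsProximalWith g ε α v W) (hε : 0 < ε) :
    ∀ w ∈ W, ε ≤ ‖‖v‖⁻¹ • v - w‖ := fun _ ↦
  le_norm_sub_of_two_mul_le hg.norm_inv_norm_smul_eq_one (hg.le_one hε)
    fun _ ↦ hg.two_mul_le_norm_sub

lemma norm_apply_le_mul_norm (hg : IsEpsProximalWith g ε α v W) (hε : 0 < ε) {w : V}
    (hw : w ∈ W) (nw : ‖w‖ = 1) :
    ‖g w‖ ≤ 2 * (1 + ε) * ‖α • (‖v‖⁻¹ • v) + (ε / 8) • g w‖ := by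
  set e := ‖v‖⁻¹ • v
  set s := ε / 8 with hs
  set u := e + s • w
  have he : ‖e‖ = 1 := hg.norm_inv_norm_smul_eq_one
  have hue : ‖u - e‖ = s := by
    rw [add_sub_cancel_left, norm_smul, nw, mul_one, Real.norm_of_nonneg (by positivity)]
  have hu0 : u ≠ 0 := by
    rintro hu
    rw [hu, zero_sub, norm_neg, he] at hue
    linarith [hg.le_one hε]
  have hδu : ε ≤ projDelta (span ℝ {u}) W :=
    le_projDelta_span_of_norm_sub_le he (hg.ne_bot hε) (fun _ ↦ hg.two_mul_le_norm_sub) hu0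
      (by linarith)
  have hδv : ε ≤ projDelta (span ℝ {v}) W := by linarith [hg.2.1]
  have hgu : g u = α • e + s • g w := by rw [map_add, hg.apply_inv_norm_smul, map_smul]
  have hmap_u : map (g : V →ₗ[ℝ] V) (span ℝ {u}) = span ℝ {α • e + s • g w} := by
    rw [map_span, Set.image_singleton, ContinuousLinearMap.coe_coe, hgu]
  have hmap_v : map (g : V →ₗ[ℝ] V) (span ℝ {v}) = span ℝ {e} := by
    rw [map_span, Set.image_singleton, ContinuousLinearMap.coe_coe, hg.1.2.1,
      span_singleton_smul_eq (hg.ne_zero hε.le).isUnit, hg.span_inv_norm_smul]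
  have hz0 : α • e + s • g w ≠ 0 := by
    have := (hg.2.2.1 _ (finrank_span_singleton hu0) hδu).1
    rwa [hmap_u, Ne, span_singleton_eq_bot] at this
  have hlip := hg.2.2.2 _ _ (finrank_span_singleton hu0) (finrank_span_singleton hg.1.1) hδu hδv
  rw [hmap_u, hmap_v, ← hg.span_inv_norm_smul] at hlip
  have hlow := mul_norm_le_mul_projDist he hε.le (hg.le_norm_sub hε) α
    (W.smul_mem s (hg.apply_mem hw)) hz0
  have hup := projDist_span_singleton_le hu0 he
  rw [norm_smul, Real.norm_of_nonneg (by positivity : 0 ≤ s)] at hlow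
  rw [hue] at hup
  have hs0 : 0 < s := by positivity
  refine le_of_mul_le_mul_left ?_ (mul_pos hε hs0)
  calc ε * s * ‖g w‖ = ε * (s * ‖g w‖) := by ring
    _ ≤ (1 + ε) * ‖α • e + s • g w‖ * (ε * (2 * s)) := by
        refine hlow.trans (mul_le_mul_of_nonneg_left (hlip.trans ?_) (by positivity))
        gcongr
    _ = ε * s * (2 * (1 + ε) * ‖α • e + s • g w‖) := by ring

lemma norm_apply_le (hg : IsEpsProximalWith g ε α v W) (hε : 0 < ε) {w : V} (hw : w ∈ W) :
    ‖g w‖ ≤ 8 * |α| * ‖w‖ := by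
  have hunit : ∀ w ∈ W, ‖w‖ = 1 → ‖g w‖ ≤ 8 * |α| := fun w hw nw ↦ by
    have hkey := hg.norm_apply_le_mul_norm hε hw nw
    have hz : ‖α • (‖v‖⁻¹ • v) + (ε / 8) • g w‖ ≤ |α| + ε / 8 * ‖g w‖ := by
      refine (norm_add_le _ _).trans_eq ?_
      rw [norm_smul α, hg.norm_inv_norm_smul_eq_one, norm_smul (ε / 8), Real.norm_eq_abs,
        Real.norm_of_nonneg (by positivity), mul_one]
    have hε1 := hg.le_one hε
    have : ‖g w‖ ≤ 2 * (1 + ε) * (|α| + ε / 8 * ‖g w‖) := hkey.trans (by gcongr)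
    nlinarith [mul_nonneg (sub_nonneg.2 hε1) (abs_nonneg α),
      mul_nonneg (mul_nonneg (sub_nonneg.2 hε1) (by linarith : (0 : ℝ) ≤ 2 + ε))
        (norm_nonneg (g w))]
  rcases eq_or_ne w 0 with rfl | hw0
  · simp
  have hw_pos : 0 < ‖w‖ := norm_pos_iff.2 hw0
  have := hunit _ (W.smul_mem ‖w‖⁻¹ hw) (norm_smul_inv_norm hw0)
  rw [map_smul, norm_smul, norm_inv, norm_norm, inv_mul_le_iff₀ hw_pos] at this
  linarith

lemma mul_norm_le (hg : IsEpsProximalWith g ε α v W) (hε : 0 < ε) : ε * ‖g‖ ≤ 17 * |α| := by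
  rw [← le_div_iff₀' hε]
  refine g.opNorm_le_bound (by positivity) fun x ↦ ?_
  have hx : x ∈ span ℝ {‖v‖⁻¹ • v} ⊔ W := by
    rw [hg.span_inv_norm_smul, hg.1.2.2.1.sup_eq_top]; trivial
  obtain ⟨_, hp, w, hw, rfl⟩ := mem_sup.1 hx
  obtain ⟨t, rfl⟩ := mem_span_singleton.1 hp
  have he := hg.norm_inv_norm_smul_eq_one
  set x := t • ‖v‖⁻¹ • v + w
  have hgx : ‖g x‖ ≤ |t| * |α| + 8 * |α| * ‖w‖ :=
    calc ‖g x‖ = ‖(t * α) • ‖v‖⁻¹ • v + g w‖ := by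
          rw [map_add, map_smul, hg.apply_inv_norm_smul, smul_smul]
      _ ≤ ‖(t * α) • ‖v‖⁻¹ • v‖ + ‖g w‖ := norm_add_le _ _
      _ ≤ |t| * |α| + 8 * |α| * ‖w‖ := by
        rw [norm_smul, he, mul_one, Real.norm_eq_abs, abs_mul]
        gcongr
        exact hg.norm_apply_le hε hw
  have h₁ := mul_abs_le_norm_smul_add (hg.le_norm_sub hε) t hw
  have h₂ := mul_norm_le_norm_smul_add he hε.le (hg.le_norm_sub hε) t hw
  have hε1 := hg.le_one hε
  rw [div_mul_eq_mul_div, le_div_iff₀ hε]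
  calc ‖g x‖ * ε ≤ (|t| * |α| + 8 * |α| * ‖w‖) * ε := by gcongr
    _ = |α| * (ε * |t|) + 8 * |α| * (ε * ‖w‖) := by ring
    _ ≤ |α| * ‖x‖ + 8 * |α| * ((1 + ε) * ‖x‖) := by gcongr
    _ ≤ 17 * |α| * ‖x‖ := by nlinarith [mul_nonneg (abs_nonneg α) (norm_nonneg x)]

end IsEpsProximalWith

theorem stmt_14_general (ε : ℝ) (hε : 0 < ε) :
    ∃ c : ℝ, 0 < c ∧ c < 1 ∧ ∀ g : V →L[ℝ] V, IsEpsProximal g ε →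
      c * ‖g‖ ≤ specRad g ∧ specRad g ≤ ‖g‖ := by
  refine ⟨min (ε / 17) (1 / 2), by positivity, (min_le_right _ _).trans_lt (by norm_num), ?_⟩
  rintro g ⟨α, v, W, hg⟩
  refine ⟨?_, specRad_le_norm g⟩
  calc min (ε / 17) (1 / 2) * ‖g‖ ≤ ε / 17 * ‖g‖ := by gcongr; exact min_le_left _ _
    _ ≤ |α| := by linarith [hg.mul_norm_le hε]
    _ ≤ specRad g := abs_le_specRad hg.1.1 hg.1.2.1

/-- Corollary 6.3: for every `ε > 0` there is `c_ε ∈ (0,1)` such that every `ε`-proximal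
transformation `g` of `V` satisfies `c_ε ‖g‖ ≤ λ₁(g) ≤ ‖g‖`, where `λ₁(g)` is the maximal
modulus of the complex eigenvalues of `g` (given here by Gelfand's formula). -/
theorem stmt_14 [FiniteDimensional ℝ V] (ε : ℝ) (hε : 0 < ε) :
    ∃ c : ℝ, 0 < c ∧ c < 1 ∧ ∀ g : V →L[ℝ] V, IsEpsProximal g ε →
      c * ‖g‖ ≤ specRad g ∧ specRad g ≤ ‖g‖ :=
  stmt_14_general ε hε
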